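/- Let κ ≥ 3 be a cardinal, let x ∈ T_κ and let α ≥ 1 be a countable ordinal with comp(x) ≤ α. For every direction D of T_κ at x, the intersection D ∩ T_κ^{[α]} is non-empty; more precisely, if D consists of those g with g ∧ x ≺ x then D contains all restrictions x|_{(−∞, s)} with s < ρ_x, and if D = {g ∈ T_κ : x ≺ g and g(ρ_x) = c} for some c ∈ C_κ, then the function g : (−∞, ρ_x + 1) → C_κ which agrees with x on (−∞, ρ_x) and takes the constant value c on [ρ_x, ρ_x + 1) satisfies P_g ⊆ P_x ∪ {ρ_x} and lies in T_κ^{[α]} ∩ D. -/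

import Mathlib

open Set Filter

noncomputable section

/-- `C` is a valid label set for the valence cardinal `κ`:
`|C| = κ` if `κ` is infinite and `|C| + 1 = κ` (i.e. `|C| = κ - 1`) if `κ` is finite. -/
def IsLabelSet (κ : Cardinal) (C : Type) : Prop :=
  (Cardinal.aleph0 ≤ κ → Cardinal.mk C = κ) ∧ (κ < Cardinal.aleph0 → Cardinal.mk C + 1 = κ)

/-- An ordinal is countable. -/
def IsCountableOrdinal (o : Ordinal) : Prop := o.card ≤ Cardinal.aleph0

/-- One-step Cantor–Bendixson derivative of a set: its non-isolated points. -/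
def cbStep {X : Type*} [TopologicalSpace X] (A : Set X) : Set X :=
  {x | x ∈ A ∧ AccPt x (Filter.principal A)}

/-- The iterated Cantor–Bendixson derivative of a set. -/
def cbDeriv {X : Type*} [TopologicalSpace X] (A : Set X) (o : Ordinal) : Set X :=
  Ordinal.limitRecOn o A (fun _ ih => cbStep ih)
    (fun o _ ih => ⋂ (o' : Ordinal) (h : o' < o), ih o' h)

/-- The Cantor–Bendixson rank of a set: the least ordinal `γ` such that the `(γ+1)`-st
Cantor–Bendixson derivative equals the `γ`-th one. -/
def cbRank {X : Type*} [TopologicalSpace X] (A : Set X) : Ordinal :=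
  sInf {γ | cbDeriv A (γ + 1) = cbDeriv A γ}

theorem cbDeriv_zero {X : Type*} [TopologicalSpace X] (A : Set X) : cbDeriv A 0 = A :=
  Ordinal.limitRecOn_zero ..

theorem cbDeriv_one {X : Type*} [TopologicalSpace X] (A : Set X) :
    cbDeriv A 1 = cbStep A := by
  have : (1 : Ordinal) = Order.succ 0 := by
    rw [← Ordinal.add_one_eq_succ, zero_add]
  rw [cbDeriv, this, Ordinal.limitRecOn_succ]
  rw [← cbDeriv, cbDeriv_zero]

theorem cbStep_empty {X : Type*} [TopologicalSpace X] : cbStep (∅ : Set X) = ∅ := by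
  ext x; simp [cbStep]

theorem cbRank_empty {X : Type*} [TopologicalSpace X] : cbRank (∅ : Set X) = 0 := by
  refine le_antisymm ?_ zero_le
  refine csInf_le' ?_
  show cbDeriv (∅ : Set X) (0 + 1) = cbDeriv (∅ : Set X) 0
  rw [zero_add, cbDeriv_one, cbDeriv_zero, cbStep_empty]

/-- A point of Dyubina's universal real tree over the label set `C` (with distinguished label
`z`): a function `(-∞, ρ) → C`, encoded as a total function on `ℝ` which takes the value `z`
on `[ρ, ∞)`, which is eventually `z` near `-∞` and piecewise constant from the right. -/
structure UTree (C : Type) (z : C) where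
  ρ : ℝ
  f : ℝ → C
  apply_eq_of_ge : ∀ t, ρ ≤ t → f t = z
  eventually_zero : ∃ s, s ≤ ρ ∧ ∀ t, t < s → f t = z
  piecewise_const : ∀ t, t < ρ → ∃ ε > 0, ∀ u, t ≤ u → u ≤ t + ε → u < ρ → f u = f t

namespace UTree

variable {C : Type} {z : C}

theorem ext' {a b : UTree C z} (h1 : a.ρ = b.ρ) (h2 : a.f = b.f) : a = b := by
  cases a; cases b; cases h1; cases h2; rfl

/-- The partial order `⪯` : `a ⪯ b` iff `a` is the restriction of `b` to `(-∞, ρ_a)`. -/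
protected def le (a b : UTree C z) : Prop :=
  a.ρ ≤ b.ρ ∧ ∀ t, t < a.ρ → a.f t = b.f t

/-- The strict order `≺`. -/
protected def lt (a b : UTree C z) : Prop := a.le b ∧ a ≠ b

/-- The set of times up to which `a` and `b` agree. -/
def agreeSet (a b : UTree C z) : Set ℝ :=
  {t | t ≤ min a.ρ b.ρ ∧ ∀ u, u < t → a.f u = b.f u}

theorem agreeSet_nonempty (a b : UTree C z) : (agreeSet a b).Nonempty := by
  obtain ⟨s₁, hs₁, h₁⟩ := a.eventually_zero
  obtain ⟨s₂, hs₂, h₂⟩ := b.eventually_zero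
  refine ⟨min s₁ s₂, le_min ((min_le_left _ _).trans hs₁) ((min_le_right _ _).trans hs₂), ?_⟩
  intro u hu
  rw [h₁ u (lt_of_lt_of_le hu (min_le_left _ _)), h₂ u (lt_of_lt_of_le hu (min_le_right _ _))]

theorem agreeSet_bddAbove (a b : UTree C z) : BddAbove (agreeSet a b) :=
  ⟨min a.ρ b.ρ, fun _ ht => ht.1⟩

/-- `ρ_{a ∧ b}`, the height of the wedge of `a` and `b`. -/
def wedgeρ (a b : UTree C z) : ℝ := sSup (agreeSet a b)

theorem wedgeρ_le_min (a b : UTree C z) : wedgeρ a b ≤ min a.ρ b.ρ :=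
  csSup_le (agreeSet_nonempty a b) fun _ ht => ht.1

theorem agree_of_lt_wedgeρ (a b : UTree C z) {u : ℝ} (hu : u < wedgeρ a b) :
    a.f u = b.f u := by
  obtain ⟨t, ht, hut⟩ := exists_lt_of_lt_csSup (agreeSet_nonempty a b) hu
  exact ht.2 u hut

theorem le_wedgeρ {a b : UTree C z} {t : ℝ} (ht : t ∈ agreeSet a b) : t ≤ wedgeρ a b :=
  le_csSup (agreeSet_bddAbove a b) ht

theorem wedgeρ_comm (a b : UTree C z) : wedgeρ a b = wedgeρ b a := by
  unfold wedgeρ agreeSet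
  congr 1
  ext t
  constructor <;> rintro ⟨h1, h2⟩ <;>
    exact ⟨by rwa [min_comm], fun u hu => (h2 u hu).symm⟩

theorem wedgeρ_self (a : UTree C z) : wedgeρ a a = a.ρ := by
  refine le_antisymm ((wedgeρ_le_min a a).trans (by simp)) ?_
  exact le_wedgeρ ⟨by simp, fun _ _ => rfl⟩

/-- Restriction of `a` to `(-∞, s)` for `s ≤ ρ_a`. -/
def restrict (a : UTree C z) (s : ℝ) (hs : s ≤ a.ρ) : UTree C z where
  ρ := s
  f := fun t => if t < s then a.f t else z
  apply_eq_of_ge := fun t ht => by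
    show (if t < s then a.f t else z) = z
    rw [if_neg (not_lt.mpr ht)]
  eventually_zero := by
    obtain ⟨s', hs', h'⟩ := a.eventually_zero
    refine ⟨min s' s, min_le_right _ _, fun t ht => ?_⟩
    show (if t < s then a.f t else z) = z
    by_cases h : t < s
    · rw [if_pos h]; exact h' t (lt_of_lt_of_le ht (min_le_left _ _))
    · rw [if_neg h]
  piecewise_const := fun t ht => by
    obtain ⟨ε, hε, h⟩ := a.piecewise_const t (lt_of_lt_of_le ht hs)
    refine ⟨ε, hε, fun u hu1 hu2 hu3 => ?_⟩
    show (if u < s then a.f u else z) = (if t < s then a.f t else z)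
    rw [if_pos hu3, if_pos ht]
    exact h u hu1 hu2 (lt_of_lt_of_le hu3 hs)

/-- The wedge `a ∧ b`: the restriction of `a` to `(-∞, ρ_{a ∧ b})`. -/
def wedge (a b : UTree C z) : UTree C z :=
  a.restrict (wedgeρ a b) ((wedgeρ_le_min a b).trans (min_le_left _ _))

theorem min_wedgeρ_le (a b c : UTree C z) :
    min (wedgeρ a b) (wedgeρ b c) ≤ wedgeρ a c := by
  refine le_wedgeρ ⟨le_min ?_ ?_, fun u hu => ?_⟩
  · exact (min_le_left _ _).trans ((wedgeρ_le_min a b).trans (min_le_left _ _))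
  · exact (min_le_right _ _).trans ((wedgeρ_le_min b c).trans (min_le_right _ _))
  · have h1 : a.f u = b.f u :=
      agree_of_lt_wedgeρ a b (lt_of_lt_of_le hu (min_le_left _ _))
    have h2 : b.f u = c.f u :=
      agree_of_lt_wedgeρ b c (lt_of_lt_of_le hu (min_le_right _ _))
    exact h1.trans h2

/-- The metric `d(a,b) = ρ_a + ρ_b - 2 ρ_{a ∧ b}` on the universal real tree. -/
instance : MetricSpace (UTree C z) where
  dist a b := a.ρ + b.ρ - 2 * wedgeρ a b
  dist_self a := by simp [wedgeρ_self]; ring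
  dist_comm a b := by simp only [wedgeρ_comm a b]; ring
  dist_triangle a b c := by
    have hmin := min_wedgeρ_le a b c
    have h1 : wedgeρ a b ≤ b.ρ := (wedgeρ_le_min a b).trans (min_le_right _ _)
    have h2 : wedgeρ b c ≤ b.ρ := (wedgeρ_le_min b c).trans (min_le_left _ _)
    rcases min_cases (wedgeρ a b) (wedgeρ b c) with ⟨heq, hle⟩ | ⟨heq, hle⟩ <;>
      (rw [heq] at hmin
       show a.ρ + c.ρ - 2 * wedgeρ a c ≤ (a.ρ + b.ρ - 2 * wedgeρ a b) + (b.ρ + c.ρ - 2 * wedgeρ b c)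
       linarith)
  eq_of_dist_eq_zero := by
    intro a b h
    have h1 : wedgeρ a b ≤ a.ρ := (wedgeρ_le_min a b).trans (min_le_left _ _)
    have h2 : wedgeρ a b ≤ b.ρ := (wedgeρ_le_min a b).trans (min_le_right _ _)
    have hd : a.ρ + b.ρ - 2 * wedgeρ a b = 0 := h
    have ha : a.ρ = wedgeρ a b := by linarith
    have hb : b.ρ = wedgeρ a b := by linarith
    refine ext' (ha.trans hb.symm) (funext fun t => ?_)
    by_cases ht : t < wedgeρ a b
    · exact agree_of_lt_wedgeρ a b ht
    · rw [a.apply_eq_of_ge t (ha.le.trans (not_lt.mp ht)),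
        b.apply_eq_of_ge t (hb.le.trans (not_lt.mp ht))]

theorem dist_def (a b : UTree C z) : dist a b = a.ρ + b.ρ - 2 * wedgeρ a b := rfl

/-- The point `c_ℓ`: the constant function `(-∞, ℓ) → C` with value `z`. -/
def cconst (ℓ : ℝ) : UTree C z where
  ρ := ℓ
  f := fun _ => z
  apply_eq_of_ge := fun _ _ => rfl
  eventually_zero := ⟨ℓ, le_refl ℓ, fun _ _ => rfl⟩
  piecewise_const := fun _ _ => ⟨1, one_pos, fun _ _ _ _ => rfl⟩

/-- The set of points at which `a` is locally non-constant from the left, whose closure is the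
set `P_a`. -/
def badSet (a : UTree C z) : Set ℝ :=
  {t | t < a.ρ ∧ ∀ ε > 0, ∃ u ∈ Icc (t - ε) t, ∃ v ∈ Icc (t - ε) t, a.f u ≠ a.f v}

/-- The set `P_a`. -/
def Pset (a : UTree C z) : Set ℝ := closure (badSet a)

/-- The complexity of `a`: the Cantor–Bendixson rank of `P_a`. -/
def comp (a : UTree C z) : Ordinal := cbRank (Pset a)

/-- The complexity of a pair `a ≺ b`: the Cantor–Bendixson rank of `P_b ∩ [ρ_a, ρ_b]`. -/
def pairComp (a b : UTree C z) : Ordinal := cbRank (Pset b ∩ Icc a.ρ b.ρ)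

/-- `τ_a`: the maximum of all `s ≤ ρ_a` such that `a` is `z` below `s`. -/
def tau (a : UTree C z) : ℝ := sSup {s | s ≤ a.ρ ∧ ∀ t, t < s → a.f t = z}

/-- The tree `T_κ^{[α]}` of points of complexity at most `α`. -/
def level (z : C) (α : Ordinal) : Set (UTree C z) := {a | comp a ≤ α}

theorem Pset_cconst (ℓ : ℝ) : Pset (cconst ℓ : UTree C z) = ∅ := by
  have : badSet (cconst ℓ : UTree C z) = ∅ := by
    ext t
    simp only [badSet, mem_setOf_eq, mem_empty_iff_false, iff_false, not_and]
    intro _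
    push_neg
    exact ⟨1, one_pos, fun u _ v _ => rfl⟩
  rw [Pset, this, closure_empty]

theorem comp_cconst (ℓ : ℝ) : comp (cconst ℓ : UTree C z) = 0 := by
  rw [comp, Pset_cconst, cbRank_empty]

theorem cconst_mem_level {ℓ : ℝ} (α : Ordinal) : (cconst ℓ : UTree C z) ∈ level z α := by
  show comp _ ≤ α
  rw [comp_cconst]
  exact zero_le

/-- The canonical line `L_0 = {c_ℓ : ℓ ∈ ℝ}`. -/
def L0 (z : C) : Set (UTree C z) := Set.range fun ℓ => (cconst ℓ : UTree C z)

/-- The extension of `a` by the label `c` on `[ρ_a, ρ_a + 1)`. -/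
def extend (a : UTree C z) (c : C) : UTree C z where
  ρ := a.ρ + 1
  f := fun t => if t < a.ρ then a.f t else if t < a.ρ + 1 then c else z
  apply_eq_of_ge := fun t ht => by
    show (if t < a.ρ then a.f t else if t < a.ρ + 1 then c else z) = z
    rw [if_neg (not_lt.mpr (by linarith)), if_neg (not_lt.mpr ht)]
  eventually_zero := by
    obtain ⟨s, hs, h⟩ := a.eventually_zero
    refine ⟨min s a.ρ, by have := min_le_right s a.ρ; linarith, fun t ht => ?_⟩
    show (if t < a.ρ then a.f t else if t < a.ρ + 1 then c else z) = z
    rw [if_pos (lt_of_lt_of_le ht (min_le_right _ _))]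
    exact h t (lt_of_lt_of_le ht (min_le_left _ _))
  piecewise_const := by
    intro t ht
    by_cases htρ : t < a.ρ
    · obtain ⟨ε, hε, h⟩ := a.piecewise_const t htρ
      refine ⟨min ε ((a.ρ - t) / 2), lt_min hε (by linarith), fun u hu1 hu2 _ => ?_⟩
      have hu3 : u < a.ρ := by
        have := hu2.trans (add_le_add le_rfl (min_le_right _ _))
        linarith
      show (if u < a.ρ then a.f u else if u < a.ρ + 1 then c else z) =
        (if t < a.ρ then a.f t else if t < a.ρ + 1 then c else z)
      rw [if_pos hu3, if_pos htρ]
      exact h u hu1 (hu2.trans (add_le_add le_rfl (min_le_left _ _))) hu3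
    · refine ⟨(a.ρ + 1 - t) / 2, by linarith, fun u hu1 hu2 _ => ?_⟩
      have h1 : ¬u < a.ρ := by push_neg at htρ ⊢; linarith
      have h2 : u < a.ρ + 1 := by linarith
      show (if u < a.ρ then a.f u else if u < a.ρ + 1 then c else z) =
        (if t < a.ρ then a.f t else if t < a.ρ + 1 then c else z)
      rw [if_neg h1, if_pos h2, if_neg htρ, if_pos ht]

end UTree

/-- A subset of a metric space is (geodesically) convex if it contains every point
metrically between two of its points. -/
def MetricConvex {X : Type*} [MetricSpace X] (S : Set X) : Prop :=
  ∀ x ∈ S, ∀ y ∈ S, ∀ w, dist x w + dist w y = dist x y → w ∈ S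

/-- `D` is a direction at `x`: a connected component of the complement of `{x}`. -/
def IsDirectionAt {X : Type*} [TopologicalSpace X] (x : X) (D : Set X) : Prop :=
  ∃ y, y ≠ x ∧ D = connectedComponentIn {w | w ≠ x} y

/-- The valence of a space at a point: the number of connected components of the
complement of that point. -/
def valenceAt {X : Type*} [TopologicalSpace X] (x : X) : Cardinal :=
  Cardinal.mk {D : Set X // IsDirectionAt x D}

/-- A real tree: a geodesic metric space in which any two points are joined by a unique arc. -/
def IsRealTree (X : Type*) [MetricSpace X] : Prop :=
  (∀ x y : X, ∃ γ : ℝ → X, γ 0 = x ∧ γ (dist x y) = y ∧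
      ∀ s ∈ Icc (0 : ℝ) (dist x y), ∀ t ∈ Icc (0 : ℝ) (dist x y),
        dist (γ s) (γ t) = |s - t|) ∧
  (∀ (x y : X) (γ₁ γ₂ : Path x y), Function.Injective γ₁ → Function.Injective γ₂ →
      Set.range γ₁ = Set.range γ₂)

/-!
Every point `y ≠ x` is joined to its restrictions by the 1-Lipschitz path
`t ↦ y|_{(-∞, min t ρ_y)}`. If `x ≺ y`, then `y` is constant, say `= c`, on some `[ρ_x, ρ_x + ε)`,
so `y` and the extension of `x` by `c` have a common restriction of height `> ρ_x`; the two paths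
down to it avoid `x`, and the extension lies in the direction of `y`. Otherwise no restriction of
`y` equals `x`, and the path from `y` down to the ground reaches a point `c_ℓ` with `P = ∅`.

The extension `g` of `x` satisfies `P_x ⊆ P_g ⊆ P_x ∪ {ρ_x}`. Adding a point to a closed set of a
`T₁` space does not change its derived set, and all Cantor–Bendixson derivatives from the first on
depend only on the first one; so `comp g ≤ max (comp x) 1`.
-/

universe u

section CantorBendixson

variable {X : Type*} [TopologicalSpace X]

theorem cbStep_subset (A : Set X) : cbStep A ⊆ A := fun _ hx => hx.1

theorem derivedSet_singleton [T1Space X] (p : X) : derivedSet ({p} : Set X) = ∅ := by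
  refine Set.eq_empty_of_forall_notMem fun x hx => ?_
  obtain rfl : x = p := by simpa using derivedSet_subset_closure _ hx
  have := accPt_principal_iff_clusterPt.mp hx
  simp_all [ClusterPt, Filter.neBot_iff]

theorem cbStep_eq_of_subset_union_singleton [T1Space X] {A B : Set X} {p : X} (hA : IsClosed A)
    (hAB : A ⊆ B) (hBA : B ⊆ A ∪ {p}) : cbStep B = cbStep A := by
  have hder : derivedSet B = derivedSet A := by
    refine (derivedSet_mono _ _ hBA).trans ?_ |>.antisymm (derivedSet_mono _ _ hAB)
    rw [derivedSet_union, derivedSet_singleton, Set.union_empty]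
  have hAder : derivedSet A ⊆ A := (isClosed_iff_derivedSet_subset A).mp hA
  change B ∩ derivedSet B = A ∩ derivedSet A
  rw [hder, Set.inter_eq_right.mpr (hAder.trans hAB), Set.inter_eq_right.mpr hAder]

theorem cbDeriv_add_one (A : Set X) (o : Ordinal) :
    cbDeriv A (o + 1) = cbStep (cbDeriv A o) :=
  Ordinal.limitRecOn_add_one ..

theorem cbDeriv_limit (A : Set X) {o : Ordinal} (ho : Order.IsSuccLimit o) :
    cbDeriv A o = ⋂ (o' : Ordinal) (_ : o' < o), cbDeriv A o' :=
  Ordinal.limitRecOn_limit _ _ _ _ ho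

theorem mem_cbDeriv_limit_iff {A : Set X} {o : Ordinal} (ho : Order.IsSuccLimit o) {x : X} :
    x ∈ cbDeriv A o ↔ ∀ o' < o, 1 ≤ o' → x ∈ cbDeriv A o' := by
  rw [cbDeriv_limit A ho, Set.mem_iInter₂]
  refine ⟨fun h o' ho' _ => h o' ho', fun h o' ho' => ?_⟩
  rcases eq_zero_or_pos o' with rfl | hpos
  · have h1 : x ∈ cbDeriv A 1 := h 1 (Ordinal.one_lt_of_isSuccLimit ho) le_rfl
    rw [cbDeriv_one] at h1
    rw [cbDeriv_zero]
    exact cbStep_subset A h1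
  · exact h o' ho' (Order.one_le_iff_pos.mpr hpos)

theorem cbDeriv_eq_of_cbStep_eq {A B : Set X} (h : cbStep A = cbStep B) {β : Ordinal}
    (hβ : 1 ≤ β) : cbDeriv A β = cbDeriv B β := by
  induction β using Ordinal.limitRecOn with
  | zero => exact absurd hβ (by simp)
  | add_one o ih =>
    rw [cbDeriv_add_one, cbDeriv_add_one]
    rcases eq_zero_or_pos o with rfl | hpos
    · rwa [cbDeriv_zero, cbDeriv_zero]
    · rw [ih (Order.one_le_iff_pos.mpr hpos)]
  | limit o ho ih =>
    ext x
    rw [mem_cbDeriv_limit_iff ho, mem_cbDeriv_limit_iff ho]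
    exact forall₂_congr fun o' ho' => imp_congr_right fun h1 => by rw [ih o' ho' h1]

def cbStable (A : Set X) : Set Ordinal.{u} := {γ | cbDeriv A (γ + 1) = cbDeriv A γ}

theorem cbRank_eq_sInf (A : Set X) : cbRank A = sInf (cbStable A) := rfl

theorem add_one_mem_cbStable {A : Set X} {γ : Ordinal} (h : γ ∈ cbStable A) :
    γ + 1 ∈ cbStable A :=
  calc cbDeriv A (γ + 1 + 1) = cbStep (cbDeriv A (γ + 1)) := cbDeriv_add_one ..
    _ = cbStep (cbDeriv A γ) := congrArg cbStep h
    _ = cbDeriv A (γ + 1) := (cbDeriv_add_one ..).symm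

theorem mem_cbStable_of_cbStep_eq {A B : Set X} (h : cbStep A = cbStep B) {γ : Ordinal}
    (hγ : 1 ≤ γ) (hA : γ ∈ cbStable A) : γ ∈ cbStable B := by
  change cbDeriv B (γ + 1) = cbDeriv B γ
  rwa [← cbDeriv_eq_of_cbStep_eq h hγ, ← cbDeriv_eq_of_cbStep_eq h (hγ.trans le_self_add)]

theorem cbRank_le_of_cbStep_eq {A B : Set X} (h : cbStep A = cbStep B) {α : Ordinal.{u}}
    (hα : 1 ≤ α) (hA : cbRank A ≤ α) : cbRank B ≤ α := by
  rcases (cbStable B : Set Ordinal.{u}).eq_empty_or_nonempty with hB | ⟨δ, hδ⟩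
  · rw [cbRank_eq_sInf, hB, Ordinal.sInf_empty]
    exact zero_le
  have hA_ne : (cbStable A).Nonempty :=
    ⟨δ + 1, mem_cbStable_of_cbStep_eq h.symm le_add_self (add_one_mem_cbStable hδ)⟩
  have hrank : (cbRank A : Ordinal.{u}) ∈ cbStable A := csInf_mem hA_ne
  obtain ⟨γ, hγ1, hγα, hγ⟩ : ∃ γ, 1 ≤ γ ∧ γ ≤ α ∧ γ ∈ cbStable A := by
    rcases eq_zero_or_pos (cbRank A : Ordinal.{u}) with h0 | hpos
    · exact ⟨1, le_rfl, hα, by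
      simpa only [h0, zero_add] using add_one_mem_cbStable hrank⟩
    · exact ⟨_, Order.one_le_iff_pos.mpr hpos, hA, hrank⟩
  exact (csInf_le' (mem_cbStable_of_cbStep_eq h hγ1 hγ)).trans hγα

end CantorBendixson

namespace UTree

variable {C : Type} {z : C}

@[simp] theorem restrict_ρ (a : UTree C z) {s : ℝ} (hs : s ≤ a.ρ) : (a.restrict s hs).ρ = s :=
  rfl

theorem restrict_f (a : UTree C z) {s : ℝ} (hs : s ≤ a.ρ) (t : ℝ) :
    (a.restrict s hs).f t = if t < s then a.f t else z :=
  rfl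

theorem restrict_eq_self (a : UTree C z) {s : ℝ} (hs : s ≤ a.ρ) (h : s = a.ρ) :
    a.restrict s hs = a := by
  subst h
  refine ext' rfl (funext fun t => ?_)
  rw [restrict_f]
  split_ifs with ht
  · rfl
  · exact (a.apply_eq_of_ge t (not_lt.mp ht)).symm

theorem restrict_congr {a b : UTree C z} {s : ℝ} (ha : s ≤ a.ρ) (hb : s ≤ b.ρ)
    (h : ∀ t < s, a.f t = b.f t) : a.restrict s ha = b.restrict s hb :=
  ext' rfl (funext fun t => by
    rw [restrict_f, restrict_f]
    split_ifs with ht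
    · exact h t ht
    · rfl)

theorem restrict_of_le {a b : UTree C z} (h : a.le b) : b.restrict a.ρ h.1 = a := by
  refine ext' rfl (funext fun t => ?_)
  rw [restrict_f]
  split_ifs with ht
  · exact (h.2 t ht).symm
  · exact (a.apply_eq_of_ge t (not_lt.mp ht)).symm

theorem restrict_ne_of_ρ_lt (a : UTree C z) {s : ℝ} (hs : s ≤ a.ρ) {b : UTree C z}
    (h : b.ρ < s) : a.restrict s hs ≠ b :=
  fun hab => h.ne' (by rw [← hab, restrict_ρ])

theorem restrict_le (a : UTree C z) {s : ℝ} (hs : s ≤ a.ρ) : (a.restrict s hs).le a :=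
  ⟨hs, fun _ ht => if_pos ht⟩

theorem lt_of_le_of_ρ_lt {a b : UTree C z} (h : a.le b) (hρ : a.ρ < b.ρ) : a.lt b :=
  ⟨h, fun hab => hρ.ne (congrArg ρ hab)⟩

theorem ρ_lt_of_lt {a b : UTree C z} (h : a.lt b) : a.ρ < b.ρ :=
  h.1.1.lt_of_ne fun hρ => h.2 (by rw [← restrict_of_le h.1]; exact restrict_eq_self b _ hρ)

theorem restrict_lt (a : UTree C z) {s : ℝ} (hs : s < a.ρ) : (a.restrict s hs.le).lt a :=
  lt_of_le_of_ρ_lt (restrict_le a hs.le) hs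

theorem wedgeρ_of_le {a b : UTree C z} (h : a.le b) : wedgeρ a b = a.ρ :=
  ((wedgeρ_le_min a b).trans (min_le_left _ _)).antisymm (le_wedgeρ ⟨le_min le_rfl h.1, h.2⟩)

theorem wedge_of_le {a b : UTree C z} (h : a.le b) : wedge a b = a :=
  restrict_eq_self a _ (wedgeρ_of_le h)

@[simp] theorem extend_ρ (a : UTree C z) (c : C) : (a.extend c).ρ = a.ρ + 1 :=
  rfl

theorem extend_f_of_lt (a : UTree C z) (c : C) {t : ℝ} (h : t < a.ρ) :
    (a.extend c).f t = a.f t :=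
  if_pos h

theorem extend_f_of_le_of_lt (a : UTree C z) (c : C) {t : ℝ} (h₁ : a.ρ ≤ t)
    (h₂ : t < a.ρ + 1) : (a.extend c).f t = c := by
  change (if t < a.ρ then a.f t else if t < a.ρ + 1 then c else z) = c
  rw [if_neg (not_lt.mpr h₁), if_pos h₂]

theorem lt_extend (a : UTree C z) (c : C) : a.lt (a.extend c) :=
  lt_of_le_of_ρ_lt ⟨by simp, fun _ ht => (extend_f_of_lt a c ht).symm⟩ (by simp)

theorem mem_badSet_congr {a b : UTree C z} {t : ℝ} (ha : t < a.ρ) (hb : t < b.ρ)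
    (h : ∀ u ≤ t, a.f u = b.f u) : t ∈ badSet a ↔ t ∈ badSet b := by
  simp only [badSet, Set.mem_ofPred, ha, hb, true_and]
  refine forall₂_congr fun ε _ => ?_
  constructor <;> rintro ⟨u, hu, v, hv, huv⟩ <;> refine ⟨u, hu, v, hv, ?_⟩
  · rwa [← h u hu.2, ← h v hv.2]
  · rwa [h u hu.2, h v hv.2]

theorem mem_badSet_extend_iff (a : UTree C z) (c : C) {t : ℝ} (ht : t < a.ρ) :
    t ∈ badSet (a.extend c) ↔ t ∈ badSet a :=
  mem_badSet_congr (by simp; linarith) ht fun _ hu => extend_f_of_lt a c (hu.trans_lt ht)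

theorem notMem_badSet_extend (a : UTree C z) (c : C) {t : ℝ} (ht : a.ρ < t) :
    t ∉ badSet (a.extend c) := by
  rintro ⟨htρ, hbad⟩
  rw [extend_ρ] at htρ
  obtain ⟨u, hu, v, hv, huv⟩ := hbad (t - a.ρ) (sub_pos.mpr ht)
  rw [extend_f_of_le_of_lt a c (by linarith [hu.1]) (by linarith [hu.2]),
    extend_f_of_le_of_lt a c (by linarith [hv.1]) (by linarith [hv.2])] at huv
  exact huv rfl

theorem Pset_subset_Pset_extend (a : UTree C z) (c : C) : Pset a ⊆ Pset (a.extend c) :=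
  closure_mono fun _ ht => (mem_badSet_extend_iff a c ht.1).2 ht

theorem Pset_extend_subset (a : UTree C z) (c : C) : Pset (a.extend c) ⊆ Pset a ∪ {a.ρ} := by
  have hbad : badSet (a.extend c) ⊆ badSet a ∪ {a.ρ} := by
    intro t ht
    rcases lt_trichotomy t a.ρ with h | rfl | h
    · exact Or.inl ((mem_badSet_extend_iff a c h).1 ht)
    · exact Or.inr rfl
    · exact absurd ht (notMem_badSet_extend a c h)
  calc Pset (a.extend c) ⊆ closure (badSet a ∪ {a.ρ}) := closure_mono hbad
    _ = Pset a ∪ {a.ρ} := by rw [closure_union, closure_singleton, Pset]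

theorem comp_extend_le (a : UTree C z) (c : C) {α : Ordinal.{u}} (hα : 1 ≤ α)
    (ha : comp a ≤ α) : comp (a.extend c) ≤ α :=
  cbRank_le_of_cbStep_eq (cbStep_eq_of_subset_union_singleton isClosed_closure
    (Pset_subset_Pset_extend a c) (Pset_extend_subset a c)).symm hα ha

theorem wedgeρ_restrict_restrict (a : UTree C z) {s t : ℝ} (hs : s ≤ a.ρ) (ht : t ≤ a.ρ) :
    wedgeρ (a.restrict s hs) (a.restrict t ht) = min s t := by
  refine (wedgeρ_le_min _ _).antisymm (le_wedgeρ ⟨le_rfl, fun u hu => ?_⟩)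
  change u < min s t at hu
  rw [restrict_f, restrict_f, if_pos (hu.trans_le (min_le_left _ _)),
    if_pos (hu.trans_le (min_le_right _ _))]

theorem dist_restrict_restrict (a : UTree C z) {s t : ℝ} (hs : s ≤ a.ρ) (ht : t ≤ a.ρ) :
    dist (a.restrict s hs) (a.restrict t ht) = |s - t| := by
  rw [dist_def, wedgeρ_restrict_restrict, restrict_ρ, restrict_ρ]
  rcases le_total s t with h | h
  · rw [min_eq_left h, abs_of_nonpos (by linarith)]; ring
  · rw [min_eq_right h, abs_of_nonneg (by linarith)]; ring

def trunc (a : UTree C z) (t : ℝ) : UTree C z :=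
  a.restrict (min t a.ρ) (min_le_right _ _)

theorem trunc_of_le (a : UTree C z) {t : ℝ} (ht : t ≤ a.ρ) : a.trunc t = a.restrict t ht :=
  ext' (min_eq_left ht) (by simp only [trunc, min_eq_left ht])

theorem lipschitzWith_trunc (a : UTree C z) : LipschitzWith 1 a.trunc :=
  LipschitzWith.of_dist_le_mul fun s t => by
    rw [NNReal.coe_one, one_mul, trunc, trunc, dist_restrict_restrict, Real.dist_eq]
    simpa using abs_min_sub_min_le_max s a.ρ t a.ρ

theorem mem_connectedComponentIn_restrict {U : Set (UTree C z)} (a : UTree C z) {s : ℝ}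
    (hs : s ≤ a.ρ) (hU : ∀ t (ht : t ≤ a.ρ), s ≤ t → a.restrict t ht ∈ U) :
    a ∈ connectedComponentIn U (a.restrict s hs) := by
  have hpath : IsPreconnected (a.trunc '' Icc s a.ρ) :=
    isPreconnected_Icc.image _ (lipschitzWith_trunc a).continuous.continuousOn
  have hsub : a.trunc '' Icc s a.ρ ⊆ U := by
    rintro _ ⟨t, ht, rfl⟩
    rw [trunc_of_le a ht.2]
    exact hU t ht.2 ht.1
  refine hpath.subset_connectedComponentIn ⟨s, ⟨le_rfl, hs⟩, trunc_of_le a hs⟩ hsub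
    ⟨a.ρ, ⟨hs, le_rfl⟩, ?_⟩
  rw [trunc_of_le a le_rfl, restrict_eq_self a le_rfl rfl]

theorem mem_connectedComponentIn_of_restrict_eq {U : Set (UTree C z)} {a b : UTree C z}
    {s : ℝ} (ha : s ≤ a.ρ) (hb : s ≤ b.ρ) (hab : a.restrict s ha = b.restrict s hb)
    (hUa : ∀ t (ht : t ≤ a.ρ), s ≤ t → a.restrict t ht ∈ U)
    (hUb : ∀ t (ht : t ≤ b.ρ), s ≤ t → b.restrict t ht ∈ U) :
    b ∈ connectedComponentIn U a := by
  have hb' := mem_connectedComponentIn_restrict b hb hUb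
  rw [← hab, connectedComponentIn_eq (mem_connectedComponentIn_restrict a ha hUa)] at hb'
  exact hb'

theorem extend_mem_connectedComponentIn {x y : UTree C z} (h : x.lt y) :
    x.extend (y.f x.ρ) ∈ connectedComponentIn {w | w ≠ x} y := by
  have hρ := ρ_lt_of_lt h
  obtain ⟨ε, hε, hconst⟩ := y.piecewise_const x.ρ hρ
  set s := min (x.ρ + ε) (min (x.ρ + 1) y.ρ)
  have hxs : x.ρ < s := lt_min (by linarith) (lt_min (by linarith) hρ)
  have hsy : s ≤ y.ρ := (min_le_right _ _).trans (min_le_right _ _)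
  have hsg : s ≤ (x.extend (y.f x.ρ)).ρ := by
    simp only [extend_ρ]
    exact (min_le_right _ _).trans (min_le_left _ _)
  refine mem_connectedComponentIn_of_restrict_eq hsy hsg (restrict_congr _ _ fun t ht => ?_)
    (fun t _ hst => restrict_ne_of_ρ_lt _ _ (hxs.trans_le hst))
    (fun t _ hst => restrict_ne_of_ρ_lt _ _ (hxs.trans_le hst))
  rcases lt_or_ge t x.ρ with htx | htx
  · rw [extend_f_of_lt _ _ htx, h.1.2 t htx]
  · have hts : t < x.ρ + 1 := ht.trans_le ((min_le_right _ _).trans (min_le_left _ _))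
    rw [extend_f_of_le_of_lt _ _ htx hts]
    exact hconst t htx (ht.le.trans (min_le_left _ _)) (ht.trans_le hsy)

theorem exists_cconst_mem_connectedComponentIn {x y : UTree C z} (h : ¬ x.le y) :
    ∃ ℓ, (cconst ℓ : UTree C z) ∈ connectedComponentIn {w | w ≠ x} y := by
  obtain ⟨s, hs, hzero⟩ := y.eventually_zero
  have hne : ∀ t (ht : t ≤ y.ρ), y.restrict t ht ≠ x := fun t ht hx => h (hx ▸ restrict_le y ht)
  have hab : y.restrict s hs = (cconst s : UTree C z).restrict s le_rfl :=
    restrict_congr _ _ hzero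
  refine ⟨s, mem_connectedComponentIn_of_restrict_eq hs le_rfl hab (fun t ht _ => hne t ht) ?_⟩
  intro t ht hst
  obtain rfl : t = s := le_antisymm ht hst
  rw [← hab]
  exact hne t hs

end UTree

theorem stmt18_general (C : Type) (z : C)
    (α : Ordinal) (hα1 : 1 ≤ α)
    (x : UTree C z) (hx : UTree.comp x ≤ α) :
    (∀ D : Set (UTree C z), IsDirectionAt x D → (D ∩ UTree.level z α).Nonempty) ∧
    (∀ s : ℝ, ∀ hs : s < x.ρ,
      x.restrict s hs.le ∈ {g : UTree C z | (UTree.wedge g x).lt x}) ∧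
    (∀ c : C,
      UTree.Pset (x.extend c) ⊆ UTree.Pset x ∪ {x.ρ} ∧
      x.extend c ∈ UTree.level z α ∧
      x.extend c ∈ {g : UTree C z | x.lt g ∧ g.f x.ρ = c} ∧
      (x.extend c).ρ = x.ρ + 1 ∧
      (∀ t : ℝ, t < x.ρ → (x.extend c).f t = x.f t) ∧
      (∀ t : ℝ, x.ρ ≤ t → t < x.ρ + 1 → (x.extend c).f t = c)) := by
  refine ⟨?_, fun s hs => ?_, fun c => ?_⟩
  · rintro D ⟨y, hyx, rfl⟩
    by_cases hxy : x.le y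
    · exact ⟨_, UTree.extend_mem_connectedComponentIn ⟨hxy, hyx.symm⟩,
        UTree.comp_extend_le x _ hα1 hx⟩
    · obtain ⟨ℓ, hℓ⟩ := UTree.exists_cconst_mem_connectedComponentIn hxy
      exact ⟨_, hℓ, UTree.cconst_mem_level α⟩
  · change (UTree.wedge _ x).lt x
    rw [UTree.wedge_of_le (UTree.restrict_le x hs.le)]
    exact UTree.restrict_lt x hs
  · exact ⟨UTree.Pset_extend_subset x c, UTree.comp_extend_le x c hα1 hx,
      ⟨UTree.lt_extend x c, UTree.extend_f_of_le_of_lt x c le_rfl (lt_add_one _)⟩, rfl,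
      fun _ => UTree.extend_f_of_lt x c, fun _ => UTree.extend_f_of_le_of_lt x c⟩

/-- Every direction of `T_κ` at a point `x` of complexity at most `α` meets `T_κ^{[α]}`:
the direction `{g : g ∧ x ≺ x}` contains every restriction `x|_{(-∞,s)}` with `s < ρ_x`,
and for each label `c` the extension of `x` by `c` on `[ρ_x, ρ_x + 1)` satisfies
`P_g ⊆ P_x ∪ {ρ_x}` and lies in `T_κ^{[α]} ∩ D_c`. -/
theorem stmt18 (κ : Cardinal) (hκ : 3 ≤ κ) (C : Type) (z : C) (hC : IsLabelSet κ C)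
    (α : Ordinal) (hα1 : 1 ≤ α) (hαc : IsCountableOrdinal α)
    (x : UTree C z) (hx : UTree.comp x ≤ α) :
    (∀ D : Set (UTree C z), IsDirectionAt x D → (D ∩ UTree.level z α).Nonempty) ∧
    (∀ s : ℝ, ∀ hs : s < x.ρ,
      x.restrict s hs.le ∈ {g : UTree C z | (UTree.wedge g x).lt x}) ∧
    (∀ c : C,
      UTree.Pset (x.extend c) ⊆ UTree.Pset x ∪ {x.ρ} ∧
      x.extend c ∈ UTree.level z α ∧
      x.extend c ∈ {g : UTree C z | x.lt g ∧ g.f x.ρ = c} ∧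
      (x.extend c).ρ = x.ρ + 1 ∧
      (∀ t : ℝ, t < x.ρ → (x.extend c).f t = x.f t) ∧
      (∀ t : ℝ, x.ρ ≤ t → t < x.ρ + 1 → (x.extend c).f t = c)) :=
  stmt18_general C z α hα1 x hx

end
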